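/- arXiv:1705.02778 — 2 statements merged into one kernel-verified Lean document; each statement's English description precedes it below -/
import Mathlib

section
/- Let R be a unital non-associative ring, G a commutative monoid, and π a unital G-derivation on R that is strong and well-ordered, and let S = R[G;π] be the differential monoid ring. Assume that either (D8) holds, or (D7) holds and π is commutative. Then S is G-simple if and only if R is G-simple and Z(S)^G is a field, where Z(S)^G = {s ∈ Z(S) : for all a,b ∈ G, π̃^a_b(s) = s if a = b and π̃^a_b(s) = 0 otherwise}. -/
open scoped Classical

/-! Common framework: Ore monoid rings `R[G;π]` over a unital non-associative ring `R`
and a monoid `G`.  A `G`-derivation `π = {π^a_b}` is encoded as a map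
`π : G → R → (G →₀ R)`, where `π a r b = π^a_b(r)`; axiom (D0) (finite support in `b`)
is built into the `Finsupp` encoding.  The Ore monoid ring `S = R[G;π]` is the
additive group `G →₀ R` of finitely supported formal sums `Σ r_a xᵃ`
(with `Finsupp.single a r` representing `r xᵃ`), equipped with the
multiplication `GDeriv.mul` below. -/

/-- A two-sided ideal with respect to a (possibly non-associative, non-unital)
multiplication `m` on an additive group `A`. -/
structure IsIdealWith {A : Type*} [AddCommGroup A] (m : A → A → A) (J : Set A) : Prop where
  zero_mem : (0 : A) ∈ J
  add_mem : ∀ {x y : A}, x ∈ J → y ∈ J → x + y ∈ J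
  neg_mem : ∀ {x : A}, x ∈ J → -x ∈ J
  mul_mem_left : ∀ (r : A) {x : A}, x ∈ J → m r x ∈ J
  mul_mem_right : ∀ {x : A} (r : A), x ∈ J → m x r ∈ J

/-- The subset `F` of `A` is a field with respect to the multiplication `m` with
identity `one`: it is a commutative unital subring in which every nonzero element
has a multiplicative inverse. -/
def IsFieldWith {A : Type*} [AddCommGroup A] (m : A → A → A) (one : A) (F : Set A) : Prop :=
  one ∈ F ∧ (∀ x ∈ F, ∀ y ∈ F, x + y ∈ F) ∧ (∀ x ∈ F, -x ∈ F) ∧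
  (∀ x ∈ F, ∀ y ∈ F, m x y ∈ F) ∧ (∀ x ∈ F, ∀ y ∈ F, m x y = m y x) ∧
  (∀ x ∈ F, x ≠ 0 → ∃ y ∈ F, m x y = one ∧ m y x = one)

/-- A `G`-derivation on `R`: axioms (D0)–(D4).  Here `π a r b` denotes `π^a_b(r)`,
and (D0) holds by the finite support of `π a r : G →₀ R`. -/
structure GDeriv (R : Type*) [NonAssocRing R] (G : Type*) [Monoid G] where
  /-- the family of maps; `π a r b = π^a_b(r)` -/
  π : G → R → (G →₀ R)
  /-- (D1): `π^e_e = id` and `π^e_a = 0` for `a ≠ e` -/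
  d1 : ∀ r : R, π 1 r = Finsupp.single 1 r
  /-- (D2): `π^a_b(1) = δ_{a,b}` -/
  d2 : ∀ a : G, π a (1 : R) = Finsupp.single a (1 : R)
  /-- (D3): each `π^a_b` is additive -/
  d3 : ∀ (a : G) (r s : R), π a (r + s) = π a r + π a s
  /-- (D4): `π^{ab}_c = Σ_{df = c} π^a_d ∘ π^b_f` -/
  d4 : ∀ (a b : G) (r : R),
    π (a * b) r = (π b r).sum fun f s => (π a s).sum fun d t => Finsupp.single (d * f) t

namespace GDeriv

variable {R : Type*} [NonAssocRing R] {G : Type*} [Monoid G] (P : GDeriv R G)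

/-- The multiplication of the Ore monoid ring `S = R[G;π]` on `G →₀ R`:
the biadditive extension of `(r xᵃ)(s xᵇ) = Σ_c r π^a_c(s) x^{cb}`. -/
noncomputable def mul (u v : G →₀ R) : G →₀ R :=
  u.sum fun a r => v.sum fun b s => (P.π a s).sum fun c t => Finsupp.single (c * b) (r * t)

/-- The multiplicative identity `1·xᵉ` of `S`. -/
noncomputable def one (_P : GDeriv R G) : G →₀ R := Finsupp.single 1 1

/-- `R^G = {r ∈ R : π^a_b(r) = δ_{a,b} r}`. -/
def fixed : Set R := {r | ∀ a : G, P.π a r = Finsupp.single a r}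

/-- `S^G = Σ_a R^G xᵃ`, the elements of `S` all of whose coefficients lie in `R^G`. -/
def fixedS : Set (G →₀ R) := {u | ∀ c : G, u c ∈ P.fixed}

/-- (D7): every `π^a_b` is left `R^G`-linear. -/
def LeftLinear : Prop := ∀ a b : G, ∀ s ∈ P.fixed, ∀ r : R, P.π a (s * r) b = s * P.π a r b

/-- (D8): every `π^a_b` is right `R^G`-linear. -/
def RightLinear : Prop := ∀ a b : G, ∀ r : R, ∀ s ∈ P.fixed, P.π a (r * s) b = P.π a r b * s

/-- `π` is strong if (D7) or (D8) holds. -/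
def Strong : Prop := P.LeftLinear ∨ P.RightLinear

/-- (D6): `π^a_a = id_R` for all `a ∈ G` (i.e. `π` is unital). -/
def Unital : Prop := ∀ (a : G) (r : R), P.π a r a = r

/-- `π` is commutative: `π^a_b ∘ π^c_d = π^c_d ∘ π^a_b`. -/
def Commutes : Prop := ∀ (a b c d : G) (r : R), P.π a (P.π c r d) b = P.π c (P.π a r b) d

/-- `π` is well-ordered: there is a well-order on `G` whose strict part `lt`
satisfies `π^a_b = 0` whenever `a ≺ b`. -/
def WellOrdered : Prop :=
  ∃ lt : G → G → Prop, IsWellOrder G lt ∧ ∀ a b : G, lt a b → ∀ r : R, P.π a r b = 0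

/-- The extension `π̃^a_b : S → S`, `π̃^a_b(Σ_c r_c x^c) = Σ_c π^a_b(r_c) x^c`. -/
noncomputable def ext (a b : G) (u : G →₀ R) : G →₀ R := u.sum fun c r => Finsupp.single c (P.π a r b)

/-- The commutator `[u,v] = uv - vu` in `S`. -/
noncomputable def commS (u v : G →₀ R) : G →₀ R := P.mul u v - P.mul v u

/-- The associator `(u,v,w) = (uv)w - u(vw)` in `S`. -/
noncomputable def assocS (u v w : G →₀ R) : G →₀ R := P.mul (P.mul u v) w - P.mul u (P.mul v w)

/-- The left nucleus `N_l(S)`. -/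
def Nl : Set (G →₀ R) := {u | ∀ v w, P.assocS u v w = 0}

/-- The middle nucleus `N_m(S)`. -/
def Nm : Set (G →₀ R) := {u | ∀ v w, P.assocS v u w = 0}

/-- The right nucleus `N_r(S)`. -/
def Nr : Set (G →₀ R) := {u | ∀ v w, P.assocS v w u = 0}

/-- The commuter `C(S)`. -/
def CS : Set (G →₀ R) := {u | ∀ v, P.mul u v = P.mul v u}

/-- The center `Z(S) = C(S) ∩ N_l(S) ∩ N_m(S) ∩ N_r(S)`. -/
def Z : Set (G →₀ R) := P.CS ∩ (P.Nl ∩ P.Nm ∩ P.Nr)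

/-- `Z(S)^G = {s ∈ Z(S) : π̃^a_b(s) = δ_{a,b} s}`. -/
def ZG : Set (G →₀ R) :=
  {s | s ∈ P.Z ∧ ∀ a b : G, P.ext a b s = if a = b then s else 0}

/-- `R` is `G`-simple: `{0}` and `R` are the only `G`-invariant ideals of `R`. -/
def RSimple : Prop :=
  ∀ J : Set R, IsIdealWith (· * ·) J → (∀ a b : G, ∀ r ∈ J, P.π a r b ∈ J) →
    J = {0} ∨ J = Set.univ

/-- `S` is `G`-simple: `{0}` and `S` are the only ideals of `S` invariant under all `π̃^a_b`. -/
def SSimple : Prop :=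
  ∀ J : Set (G →₀ R), IsIdealWith P.mul J → (∀ a b : G, ∀ u ∈ J, P.ext a b u ∈ J) →
    J = {0} ∨ J = Set.univ

end GDeriv

/-!
Forward direction: a `G`-invariant ideal `J` of `R` gives the `G`-invariant ideal of `S` of
elements with all coefficients in `J`, and a nonzero `z ∈ Z(S)^G` gives the `G`-invariant
ideal `S z`, which must contain `1`; the inverse of a central element is again central.

Backward direction: in a nonzero `G`-invariant ideal `I` of `S`, take an exponent `a₀` that is
minimal among the top exponents of nonzero elements of `I`. An element of `I` without terms
above `x^{a₀}` is determined by its coefficient at `x^{a₀}`, since `π` never raises exponents.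
These coefficients form a nonzero `G`-invariant ideal of `R`, hence contain `1`: some `U ∈ I`
is `x^{a₀}` plus lower terms. Comparing leading coefficients shows that `U` is fixed by every
`π̃^a_b`, commutes with `R`, and satisfies the associativity laws against `R`, and from these
`U ∈ Z(S)^G`. As `Z(S)^G` is a field, `U` is invertible and `I = S`.
-/

theorem Finsupp.sum_single_apply_self {α M : Type*} [AddCommMonoid M] (X : α →₀ M)
    (F : α → M → M) (hF : ∀ g, F g 0 = 0) (g : α) :
    (X.sum fun b x => Finsupp.single b (F b x)) g = F g (X g) := by
  classical
  simp only [Finsupp.sum_apply, Finsupp.single_apply, Finsupp.sum_ite_eq', Finsupp.mem_support_iff]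
  split_ifs with h
  · rfl
  · rw [not_not.mp h, hF]

theorem Set.mem_center_of_mul_eq_one {M : Type*} [MulOneClass M] {z w : M}
    (hz : z ∈ Set.center M) (hwz : w * z = 1) : w ∈ Set.center M := by
  have hzw : z * w = 1 := by rw [(hz.comm w).eq, hwz]
  have cancel : ∀ x y : M, z * x = z * y → x = y := fun x y hxy => by
    rw [← one_mul x, ← one_mul y, ← hwz, hz.mid_assoc, hz.mid_assoc, hxy]
  have left_inv : ∀ x : M, z * (w * x) = x := fun x => by rw [hz.left_assoc, hzw, one_mul]
  have right_inv : ∀ x : M, z * (x * w) = x := fun x => by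
    rw [hz.left_assoc, (hz.comm x).eq, hz.mid_assoc, hzw, mul_one]
  refine ⟨fun a => cancel _ _ (by rw [left_inv, right_inv]), fun b c => cancel _ _ ?_,
    fun a b => cancel _ _ ?_⟩
  · rw [left_inv, hz.left_assoc, left_inv]
  · rw [right_inv, hz.left_assoc, (hz.comm a).eq, hz.mid_assoc, right_inv]

def Finsupp.VanishesAbove {α M : Type*} [LT α] [Zero M] (v : α →₀ M) (a : α) : Prop :=
  ∀ b, a < b → v b = 0

theorem Finsupp.VanishesAbove.sub {α M : Type*} [LT α] [AddGroup M] {v w : α →₀ M} {a : α}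
    (hv : v.VanishesAbove a) (hw : w.VanishesAbove a) : (v - w).VanishesAbove a :=
  fun b hb => by rw [Finsupp.sub_apply, hv b hb, hw b hb, sub_zero]

theorem Finsupp.exists_minimal_top_exponent {α M : Type*} [LinearOrder α] [WellFoundedLT α]
    [Zero M] {I : Set (α →₀ M)} {x : α →₀ M} (hx : x ∈ I) (hx0 : x ≠ 0) :
    ∃ a₀, (∃ v ∈ I, v.VanishesAbove a₀ ∧ v a₀ ≠ 0) ∧
      ∀ v ∈ I, v.VanishesAbove a₀ → v a₀ = 0 → v = 0 := by
  classical
  have top : ∀ v : α →₀ M, v ≠ 0 → ∃ a, v.VanishesAbove a ∧ v a ≠ 0 := by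
    intro v hv
    have hne := Finsupp.support_nonempty_iff.mpr hv
    refine ⟨v.support.max' hne, fun b hb => ?_,
      Finsupp.mem_support_iff.mp (v.support.max'_mem hne)⟩
    by_contra hvb
    exact (v.support.le_max' b (Finsupp.mem_support_iff.mpr hvb)).not_gt hb
  let A : Set α := {a | ∃ v ∈ I, v.VanishesAbove a ∧ v a ≠ 0}
  have hA : A.Nonempty := let ⟨a, ha⟩ := top x hx0; ⟨a, x, hx, ha⟩
  refine ⟨wellFounded_lt.min A hA, wellFounded_lt.min_mem A hA, fun v hv hlow h0 => ?_⟩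
  by_contra hv0
  obtain ⟨m, hmtop, hm⟩ := top v hv0
  have hmA : m ∈ A := ⟨v, hv, hmtop, hm⟩
  rcases lt_trichotomy m (wellFounded_lt.min A hA) with hlt | rfl | hgt
  · exact wellFounded_lt.not_lt_min A hmA hlt
  · exact hm h0
  · exact hm (hlow m hgt)

namespace GDeriv

open Finsupp

section Monoid

variable {R : Type*} [NonAssocRing R] {G : Type*} [Monoid G] (P : GDeriv R G)

noncomputable def piHom (a : G) : R →+ G →₀ R := AddMonoidHom.mk' (P.π a) (P.d3 a)

theorem pi_zero (a : G) : P.π a 0 = 0 := map_zero (P.piHom a)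

theorem pi_zero_apply (a b : G) : P.π a 0 b = 0 := by rw [P.pi_zero]; rfl

theorem pi_add_apply (a : G) (r s : R) (b : G) : P.π a (r + s) b = P.π a r b + P.π a s b := by
  rw [P.d3]; rfl

theorem pi_sum_apply {ι : Type*} (a : G) (s : Finset ι) (f : ι → R) (b : G) :
    P.π a (∑ i ∈ s, f i) b = ∑ i ∈ s, P.π a (f i) b := by
  rw [show P.π a (∑ i ∈ s, f i) = ∑ i ∈ s, P.π a (f i) from map_sum (P.piHom a) f s,
    Finsupp.finsetSum_apply]

theorem pi_apply_of_mem_fixed {r : R} (hr : r ∈ P.fixed) (a b : G) :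
    P.π a r b = if a = b then r else 0 := by
  rw [hr a, Finsupp.single_apply]

theorem ext_apply (a b : G) (u : G →₀ R) (g : G) : P.ext a b u g = P.π a (u g) b :=
  u.sum_single_apply_self (fun _ r => P.π a r b) (fun _ => P.pi_zero_apply a b) g

theorem ext_single (a b c : G) (r : R) :
    P.ext a b (Finsupp.single c r) = Finsupp.single c (P.π a r b) := by
  rw [ext, Finsupp.sum_single_index (by rw [P.pi_zero_apply, Finsupp.single_zero])]

noncomputable def extHom (a b : G) : (G →₀ R) →+ G →₀ R :=
  AddMonoidHom.mk' (P.ext a b) fun u v => by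
    ext g; simp only [Finsupp.add_apply, ext_apply, pi_add_apply]

theorem ext_zero (a b : G) : P.ext a b 0 = 0 := map_zero (P.extHom a b)

theorem ext_add (a b : G) (u v : G →₀ R) : P.ext a b (u + v) = P.ext a b u + P.ext a b v :=
  map_add (P.extHom a b) u v

theorem ext_neg (a b : G) (u : G →₀ R) : P.ext a b (-u) = -P.ext a b u :=
  map_neg (P.extHom a b) u

theorem ext_finsupp_sum (a b : G) (X : G →₀ R) (F : G → R → G →₀ R) :
    P.ext a b (X.sum F) = X.sum fun c r => P.ext a b (F c r) :=
  map_finsuppSum (P.extHom a b) X F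

theorem ext_eq_ite_of_forall_mem_fixed {u : G →₀ R} (hu : ∀ c, u c ∈ P.fixed) (a b : G) :
    P.ext a b u = if a = b then u else 0 := by
  ext g
  rw [P.ext_apply, P.pi_apply_of_mem_fixed (hu g)]
  split_ifs <;> rfl

theorem mem_fixed_of_ext_eq_ite {u : G →₀ R}
    (hu : ∀ a b, P.ext a b u = if a = b then u else 0) (c : G) : u c ∈ P.fixed := by
  intro a
  ext b
  rw [Finsupp.single_apply, ← P.ext_apply, hu a b]
  split_ifs <;> rfl

theorem mul_single_single (b : G) (s : R) (g : G) (t : R) :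
    P.mul (single b s) (single g t) = (P.π b t).sum fun c z => single (c * g) (s * z) := by
  rw [mul, sum_single_index, sum_single_index]
  · simp [P.pi_zero]
  · simp

theorem zero_mul' (v : G →₀ R) : P.mul 0 v = 0 := sum_zero_index

theorem mul_zero' (u : G →₀ R) : P.mul u 0 = 0 := by simp [mul]

theorem add_mul' (u u' v : G →₀ R) : P.mul (u + u') v = P.mul u v + P.mul u' v := by
  refine sum_add_index' (fun _ => by simp) fun a r r' => ?_
  simp only [← sum_add, add_mul, single_add]

theorem mul_add' (u v v' : G →₀ R) : P.mul u (v + v') = P.mul u v + P.mul u v' := by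
  rw [mul, mul, mul, ← sum_add]
  refine sum_congr fun a _ => sum_add_index' (fun _ => by simp [P.pi_zero]) fun b s s' => ?_
  rw [P.d3]
  exact sum_add_index' (fun _ => by simp) fun _ _ _ => by rw [mul_add, single_add]

noncomputable def mulRightHom (v : G →₀ R) : (G →₀ R) →+ G →₀ R :=
  AddMonoidHom.mk' (P.mul · v) (P.add_mul' · · v)

noncomputable def mulLeftHom (u : G →₀ R) : (G →₀ R) →+ G →₀ R :=
  AddMonoidHom.mk' (P.mul u) (P.mul_add' u)

theorem neg_mul' (u v : G →₀ R) : P.mul (-u) v = -P.mul u v := map_neg (P.mulRightHom v) u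

theorem finsupp_sum_mul' (v X : G →₀ R) (F : G → R → G →₀ R) :
    P.mul (X.sum F) v = X.sum fun a r => P.mul (F a r) v :=
  map_finsuppSum (P.mulRightHom v) X F

theorem mul_finsupp_sum' (v X : G →₀ R) (F : G → R → G →₀ R) :
    P.mul v (X.sum F) = X.sum fun a r => P.mul v (F a r) :=
  map_finsuppSum (P.mulLeftHom v) X F

theorem mul_single (X : G →₀ R) (g : G) (t : R) :
    P.mul X (single g t) = X.sum fun a r => (P.π a t).sum fun c z => single (c * g) (r * z) :=
  sum_congr fun a _ => sum_single_index (by simp [P.pi_zero])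

theorem single_one_mul (r : R) (X : G →₀ R) :
    P.mul (single 1 r) X = X.sum fun b x => single b (r * x) := by
  rw [mul, sum_single_index (by simp)]
  exact sum_congr fun b _ => by rw [P.d1, sum_single_index (by simp), one_mul]

theorem single_one_mul_apply (r : R) (X : G →₀ R) (g : G) :
    P.mul (single 1 r) X g = r * X g := by
  rw [P.single_one_mul]
  exact X.sum_single_apply_self (fun _ x => r * x) (fun _ => mul_zero r) g

theorem mul_single_one_apply (X : G →₀ R) (t : R) (g : G) :
    P.mul X (single 1 t) g = X.sum fun a r => r * P.π a t g := by
  rw [P.mul_single, Finsupp.sum_apply]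
  refine sum_congr fun a _ => ?_
  simp only [mul_one]
  exact (P.π a t).sum_single_apply_self (fun _ z => X a * z) (fun _ => mul_zero _) g

theorem one_mul' (X : G →₀ R) : P.mul P.one X = X := by
  rw [one, P.single_one_mul]
  conv_rhs => rw [← X.sum_single]
  simp only [one_mul]

theorem mul_one' (X : G →₀ R) : P.mul X P.one = X := by
  rw [one, P.mul_single]
  conv_rhs => rw [← X.sum_single]
  exact sum_congr fun a _ => by rw [P.d2, sum_single_index (by simp), mul_one, mul_one]

/-- `S = R[G;π]` as a type, so that it can carry the ring structure given by `P.mul`. -/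
def DiffMonoidRing (_P : GDeriv R G) : Type _ := G →₀ R

noncomputable instance : AddCommGroup P.DiffMonoidRing :=
  inferInstanceAs (AddCommGroup (G →₀ R))

noncomputable instance : NonAssocRing P.DiffMonoidRing :=
  { (inferInstance : AddCommGroup P.DiffMonoidRing) with
    mul := P.mul
    one := P.one
    left_distrib := P.mul_add'
    right_distrib := P.add_mul'
    zero_mul := P.zero_mul'
    mul_zero := P.mul_zero'
    one_mul := P.one_mul'
    mul_one := P.mul_one'
    natCast := fun n => single 1 (n : R)
    natCast_zero := by rw [Nat.cast_zero, single_zero]; rfl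
    natCast_succ := fun n => by simp only [Nat.cast_succ, single_add]; rfl }

theorem mem_Z_iff {u : G →₀ R} : u ∈ P.Z ↔ (∀ v, P.mul u v = P.mul v u) ∧
    (∀ v w, P.mul (P.mul u v) w = P.mul u (P.mul v w)) ∧
    (∀ v w, P.mul (P.mul v u) w = P.mul v (P.mul u w)) ∧
    (∀ v w, P.mul (P.mul v w) u = P.mul v (P.mul w u)) := by
  simp only [Z, CS, Nl, Nm, Nr, assocS, Set.mem_inter_iff, Set.mem_ofPred_eq, sub_eq_zero,
    and_assoc]

theorem mem_Z_iff_mem_center {u : G →₀ R} :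
    u ∈ P.Z ↔ u ∈ Set.center P.DiffMonoidRing := by
  rw [mem_Z_iff]
  constructor
  · rintro ⟨hC, hl, -, hr⟩
    exact ⟨fun v => hC v, fun v w => (hl v w).symm, fun v w => hr v w⟩
  · intro hu
    exact ⟨fun v => (hu.comm v).eq, fun v w => (hu.left_assoc v w).symm,
      fun v w => hu.mid_assoc v w, fun v w => hu.right_assoc v w⟩

theorem mul_apply_mem (J : AddSubmonoid R) {u v : G →₀ R}
    (H : ∀ a b c, u a * P.π a (v b) c ∈ J) (g : G) : P.mul u v g ∈ J := by
  classical
  simp only [mul, Finsupp.sum_apply, Finsupp.single_apply]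
  exact sum_mem fun a _ => sum_mem fun b _ => sum_mem fun c _ => by
    dsimp only
    split_ifs
    exacts [H a b c, zero_mem J]

theorem rsimple_of_ssimple (hS : P.SSimple) : P.RSimple := by
  intro J hJ hInv
  let J' : AddSubmonoid R := ⟨⟨J, hJ.add_mem⟩, hJ.zero_mem⟩
  let Jhat : Set (G →₀ R) := {u | ∀ c, u c ∈ J}
  have hideal : IsIdealWith P.mul Jhat :=
    { zero_mem := fun _ => hJ.zero_mem
      add_mem := fun hx hy c => hJ.add_mem (hx c) (hy c)
      neg_mem := fun hx c => hJ.neg_mem (hx c)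
      mul_mem_left := fun _ {_} hx => P.mul_apply_mem J' fun a b c =>
        hJ.mul_mem_left _ (hInv a c _ (hx b))
      mul_mem_right := fun _ hx => P.mul_apply_mem J' fun a _ _ => hJ.mul_mem_right _ (hx a) }
  have hinv : ∀ a b : G, ∀ u ∈ Jhat, P.ext a b u ∈ Jhat := fun a b u hu c => by
    rw [ext_apply]; exact hInv a b _ (hu c)
  have single_mem : ∀ r : R, single 1 r ∈ Jhat ↔ r ∈ J := fun r =>
    ⟨fun h => by simpa using h 1, fun hr c => by
      rw [single_apply]; split_ifs; exacts [hr, hJ.zero_mem]⟩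
  rcases hS Jhat hideal hinv with h0 | huniv
  · refine Or.inl (Set.eq_singleton_iff_unique_mem.mpr ⟨hJ.zero_mem, fun r hr => ?_⟩)
    have hmem := (single_mem r).mpr hr
    rw [h0, Set.mem_singleton_iff, single_eq_zero] at hmem
    exact hmem
  · exact Or.inr (Set.eq_univ_of_forall fun r => (single_mem r).mp (huniv ▸ Set.mem_univ _))

theorem mul_single_eq_sum_of_fixed {u : G →₀ R} (hu : ∀ c, u c ∈ P.fixed) (p : G) (r : R) :
    P.mul (single p r) u = u.sum fun a x => single (p * a) (r * x) := by
  rw [mul, sum_single_index (by simp)]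
  exact sum_congr fun a _ => by rw [hu a p, sum_single_index (by simp)]

theorem pi_pi_eq_mapRange (hco : P.Commutes) (a b p : G) (s : R) :
    P.π p (P.π a s b) = mapRange (fun t => P.π a t b) (P.pi_zero_apply a b) (P.π p s) := by
  ext c
  rw [mapRange_apply, hco]

theorem ext_mul_of_fixed_of_commute (h : P.RightLinear ∨ (P.LeftLinear ∧ P.Commutes))
    {z : G →₀ R} (hzf : ∀ c, z c ∈ P.fixed) (hzC : ∀ v, P.mul z v = P.mul v z) (a b : G)
    (v : G →₀ R) : P.ext a b (P.mul v z) = P.mul (P.ext a b v) z := by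
  induction v using Finsupp.induction_linear with
  | zero => rw [zero_mul', ext_zero, zero_mul']
  | add x y hx hy => rw [add_mul', ext_add, ext_add, add_mul', hx, hy]
  | single q s =>
    rw [ext_single]
    rcases h with h8 | ⟨h7, hco⟩
    · rw [P.mul_single_eq_sum_of_fixed hzf, P.mul_single_eq_sum_of_fixed hzf, ext_finsupp_sum]
      exact sum_congr fun c _ => by rw [ext_single, h8 a b s (z c) (hzf c)]
    · rw [← hzC, ← hzC, mul_single, mul_single, ext_finsupp_sum]
      refine sum_congr fun p _ => ?_
      rw [ext_finsupp_sum, P.pi_pi_eq_mapRange hco, sum_mapRange_index (by simp)]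
      exact sum_congr fun c _ => by rw [ext_single, h7 a b (z p) (hzf p)]

theorem one_mem_ZG : P.one ∈ P.ZG := by
  refine ⟨P.mem_Z_iff_mem_center.mpr (Set.one_mem_center (M := P.DiffMonoidRing)),
    fun a b => ?_⟩
  rw [one, ext_single, P.d2, single_apply]
  split_ifs <;> simp

theorem add_mem_ZG {x y : G →₀ R} (hx : x ∈ P.ZG) (hy : y ∈ P.ZG) : x + y ∈ P.ZG := by
  refine ⟨P.mem_Z_iff_mem_center.mpr (Set.add_mem_center (M := P.DiffMonoidRing)
    (P.mem_Z_iff_mem_center.mp hx.1) (P.mem_Z_iff_mem_center.mp hy.1)), fun a b => ?_⟩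
  rw [ext_add, hx.2, hy.2]
  split_ifs <;> simp

theorem neg_mem_ZG {x : G →₀ R} (hx : x ∈ P.ZG) : -x ∈ P.ZG := by
  refine ⟨P.mem_Z_iff_mem_center.mpr (Set.neg_mem_center (M := P.DiffMonoidRing)
    (P.mem_Z_iff_mem_center.mp hx.1)), fun a b => ?_⟩
  rw [ext_neg, hx.2]
  split_ifs <;> simp

theorem mul_mem_ZG (h : P.RightLinear ∨ (P.LeftLinear ∧ P.Commutes)) {x y : G →₀ R}
    (hx : x ∈ P.ZG) (hy : y ∈ P.ZG) : P.mul x y ∈ P.ZG := by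
  refine ⟨P.mem_Z_iff_mem_center.mpr (Set.mul_mem_center (M := P.DiffMonoidRing)
    (P.mem_Z_iff_mem_center.mp hx.1) (P.mem_Z_iff_mem_center.mp hy.1)), fun a b => ?_⟩
  rw [P.ext_mul_of_fixed_of_commute h (P.mem_fixed_of_ext_eq_ite hy.2) hy.1.1, hx.2]
  split_ifs
  · rfl
  · exact P.zero_mul' y

theorem exists_mul_eq_one_of_ssimple (h : P.RightLinear ∨ (P.LeftLinear ∧ P.Commutes))
    (hS : P.SSimple) {z : G →₀ R} (hz : z ∈ P.ZG) (hz0 : z ≠ 0) :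
    ∃ w, P.mul w z = P.one := by
  obtain ⟨hzC, -, hzNm, hzNr⟩ := P.mem_Z_iff.mp hz.1
  let Sz : Set (G →₀ R) := Set.range (P.mul · z)
  have hideal : IsIdealWith P.mul Sz :=
    { zero_mem := ⟨0, P.zero_mul' z⟩
      add_mem := by rintro _ _ ⟨x, rfl⟩ ⟨y, rfl⟩; exact ⟨x + y, P.add_mul' x y z⟩
      neg_mem := by rintro _ ⟨x, rfl⟩; exact ⟨-x, P.neg_mul' x z⟩
      mul_mem_left := by rintro r _ ⟨x, rfl⟩; exact ⟨P.mul r x, hzNr r x⟩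
      mul_mem_right := by
        rintro _ r ⟨x, rfl⟩
        exact ⟨P.mul x r, by dsimp only; rw [hzNr, ← hzC r, hzNm]⟩ }
  have hinv : ∀ a b : G, ∀ u ∈ Sz, P.ext a b u ∈ Sz := by
    rintro a b _ ⟨x, rfl⟩
    exact ⟨P.ext a b x,
      (P.ext_mul_of_fixed_of_commute h (P.mem_fixed_of_ext_eq_ite hz.2) hzC a b x).symm⟩
  rcases hS Sz hideal hinv with h0 | huniv
  · exact absurd (h0 ▸ ⟨P.one, P.one_mul' z⟩ : z ∈ ({0} : Set (G →₀ R))) hz0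
  · exact (huniv ▸ Set.mem_univ P.one : P.one ∈ Sz)

theorem isFieldWith_ZG_of_ssimple (h : P.RightLinear ∨ (P.LeftLinear ∧ P.Commutes))
    (hS : P.SSimple) : IsFieldWith P.mul P.one P.ZG := by
  refine ⟨P.one_mem_ZG, fun x hx y hy => P.add_mem_ZG hx hy, fun x hx => P.neg_mem_ZG hx,
    fun x hx y hy => P.mul_mem_ZG h hx hy, fun x hx y _ => hx.1.1 y, fun z hz hz0 => ?_⟩
  obtain ⟨w, hwz⟩ := P.exists_mul_eq_one_of_ssimple h hS hz hz0
  obtain ⟨hzC, -, hzNm, -⟩ := P.mem_Z_iff.mp hz.1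
  have hzw : P.mul z w = P.one := (hzC w).trans hwz
  have cancel : ∀ x y : G →₀ R, P.mul x z = P.mul y z → x = y := fun x y hxy => by
    rw [← P.mul_one' x, ← P.mul_one' y, ← hzw, ← hzNm, ← hzNm, hxy]
  refine ⟨w, ⟨P.mem_Z_iff_mem_center.mpr (Set.mem_center_of_mul_eq_one (M := P.DiffMonoidRing)
      (P.mem_Z_iff_mem_center.mp hz.1) hwz),
    fun a b => cancel _ _ ?_⟩, hzw, hwz⟩
  rw [← P.ext_mul_of_fixed_of_commute h (P.mem_fixed_of_ext_eq_ite hz.2) hzC, hwz,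
    P.one_mem_ZG.2]
  split_ifs
  · exact hwz.symm
  · exact (P.zero_mul' z).symm

theorem mul_single_eq_mapDomain (X : G →₀ R) (g : G) (t : R) :
    P.mul X (single g t) = mapDomain (· * g) (P.mul X (single 1 t)) := by
  simp only [mul_single, mapDomain_sum, mapDomain_single, mul_one]

theorem mul_mapDomain (X : G →₀ R) (g : G) (Y : G →₀ R) :
    P.mul X (mapDomain (· * g) Y) = mapDomain (· * g) (P.mul X Y) := by
  induction Y using Finsupp.induction_linear with
  | zero => rw [mapDomain_zero, mul_zero', mapDomain_zero]
  | add u v hu hv => rw [mapDomain_add, mul_add', mul_add', hu, hv, mapDomain_add]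
  | single q y => simp only [mapDomain_single, mul_single, mapDomain_sum, mul_assoc]

theorem single_mul_mul_single_one (a b : G) (r t : R) :
    P.mul (single (a * b) r) (single 1 t) =
      (P.π b t).sum fun q z => (P.π a z).sum fun p y => single (p * q) (r * y) := by
  have h0 : ∀ c : G, single (c * 1) (r * 0) = 0 := fun c => by rw [mul_zero, single_zero]
  have h1 : ∀ (c : G) (t₁ t₂ : R),
      single (c * 1) (r * (t₁ + t₂)) = single (c * 1) (r * t₁) + single (c * 1) (r * t₂) :=
    fun c t₁ t₂ => by rw [mul_add, single_add]
  rw [mul_single_single, P.d4, sum_sum_index h0 h1]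
  refine sum_congr fun q _ => ?_
  rw [sum_sum_index h0 h1]
  exact sum_congr fun p _ => by rw [sum_single_index (h0 _), mul_one]

theorem sum_mul_pi_eq_of_commute_single_one {U : G →₀ R}
    (hcomm : ∀ s, P.mul (single 1 s) U = P.mul U (single 1 s)) (s : R) (g : G) :
    (U.sum fun a r => r * P.π a s g) = s * U g := by
  rw [← mul_single_one_apply, ← hcomm, single_one_mul_apply]

/-- Under (D7) and commutativity, this recovers (D8) for right multiplication by the
coefficients of `U`. -/
theorem pi_mul_eq_mapRange (h : P.RightLinear ∨ (P.LeftLinear ∧ P.Commutes)) {U : G →₀ R}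
    (hUfix : ∀ c, U c ∈ P.fixed) (hcomm : ∀ s, P.mul (single 1 s) U = P.mul U (single 1 s))
    (b : G) (t : R) (p : G) :
    P.π b (t * U p) = mapRange (· * U p) (zero_mul _) (P.π b t) := by
  ext q
  rw [mapRange_apply]
  rcases h with h8 | ⟨h7, hco⟩
  · exact h8 b q t (U p) (hUfix p)
  · calc P.π b (t * U p) q = P.π b (U.sum fun a r => r * P.π a t p) q := by
          rw [P.sum_mul_pi_eq_of_commute_single_one hcomm]
      _ = U.sum fun a r => r * P.π a (P.π b t q) p := by
          rw [Finsupp.sum, P.pi_sum_apply]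
          exact Finset.sum_congr rfl fun a _ => by rw [h7 b q (U a) (hUfix a), hco]
      _ = P.π b t q * U p := P.sum_mul_pi_eq_of_commute_single_one hcomm _ p

section Order

variable [LinearOrder G]

def IsLowerTriangular : Prop := ∀ a b : G, a < b → ∀ r : R, P.π a r b = 0

theorem single_one_mul_vanishesAbove {v : G →₀ R} {a₀ : G} (hv : v.VanishesAbove a₀)
    (r : R) : (P.mul (single 1 r) v).VanishesAbove a₀ := fun b hb => by
  rw [single_one_mul_apply, hv b hb, mul_zero]

theorem mul_single_one_vanishesAbove (hlt : P.IsLowerTriangular) {v : G →₀ R} {a₀ : G}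
    (hv : v.VanishesAbove a₀) (t : R) : (P.mul v (single 1 t)).VanishesAbove a₀ := by
  intro g hg
  rw [mul_single_one_apply]
  refine Finset.sum_eq_zero fun a ha => ?_
  have ha₀ : a ≤ a₀ := not_lt.mp fun h => mem_support_iff.mp ha (hv a h)
  dsimp only
  rw [hlt a g (ha₀.trans_lt hg) t, mul_zero]

theorem mul_single_one_apply_self (hu : P.Unital) (hlt : P.IsLowerTriangular) {v : G →₀ R}
    {a₀ : G} (hv : v.VanishesAbove a₀) (t : R) : P.mul v (single 1 t) a₀ = v a₀ * t := by
  rw [mul_single_one_apply, Finsupp.sum, Finset.sum_eq_single a₀ (fun a ha hne => ?_)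
    (fun h => by rw [notMem_support_iff.mp h, zero_mul]), hu]
  have ha₀ : a ≤ a₀ := not_lt.mp fun h => mem_support_iff.mp ha (hv a h)
  rw [hlt a a₀ (lt_of_le_of_ne ha₀ hne) t, mul_zero]

theorem ext_vanishesAbove {v : G →₀ R} {a₀ : G} (hv : v.VanishesAbove a₀) (a b : G) :
    (P.ext a b v).VanishesAbove a₀ := fun g hg => by
  rw [ext_apply, hv g hg, pi_zero_apply]

def coeffsAt (I : Set (G →₀ R)) (a : G) : Set R :=
  {r | ∃ v ∈ I, v.VanishesAbove a ∧ v a = r}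

theorem coeffsAt_isIdealWith (hu : P.Unital) (hlt : P.IsLowerTriangular) {I : Set (G →₀ R)}
    (hI : IsIdealWith P.mul I) (a₀ : G) : IsIdealWith (· * ·) (coeffsAt I a₀) where
  zero_mem := ⟨0, hI.zero_mem, fun _ _ => rfl, rfl⟩
  add_mem := by
    rintro _ _ ⟨v, hv, hvl, rfl⟩ ⟨w, hw, hwl, rfl⟩
    exact ⟨v + w, hI.add_mem hv hw, fun b hb => by simp [hvl b hb, hwl b hb], rfl⟩
  neg_mem := by
    rintro _ ⟨v, hv, hvl, rfl⟩
    exact ⟨-v, hI.neg_mem hv, fun b hb => by simp [hvl b hb], rfl⟩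
  mul_mem_left := by
    rintro r _ ⟨v, hv, hvl, rfl⟩
    exact ⟨_, hI.mul_mem_left _ hv, P.single_one_mul_vanishesAbove hvl r,
      P.single_one_mul_apply r v a₀⟩
  mul_mem_right := by
    rintro _ r ⟨v, hv, hvl, rfl⟩
    exact ⟨_, hI.mul_mem_right _ hv, P.mul_single_one_vanishesAbove hlt hvl r,
      P.mul_single_one_apply_self hu hlt hvl r⟩

theorem pi_mem_coeffsAt {I : Set (G →₀ R)} (hInv : ∀ a b : G, ∀ u ∈ I, P.ext a b u ∈ I)
    {a₀ : G} {r : R} (hr : r ∈ coeffsAt I a₀) (a b : G) : P.π a r b ∈ coeffsAt I a₀ := by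
  obtain ⟨v, hv, hvl, rfl⟩ := hr
  exact ⟨P.ext a b v, hInv a b v hv, P.ext_vanishesAbove hvl a b, P.ext_apply a b v a₀⟩

theorem eq_of_vanishesAbove_of_apply_eq {I : Set (G →₀ R)} (hI : IsIdealWith P.mul I)
    {a₀ : G} (hmin : ∀ v ∈ I, v.VanishesAbove a₀ → v a₀ = 0 → v = 0) {x y : G →₀ R}
    (hx : x ∈ I) (hy : y ∈ I) (hxl : x.VanishesAbove a₀) (hyl : y.VanishesAbove a₀)
    (hxy : x a₀ = y a₀) : x = y := by
  refine sub_eq_zero.mp (hmin _ ?_ (hxl.sub hyl) (by rw [Finsupp.sub_apply, hxy, sub_self]))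
  rw [sub_eq_add_neg]
  exact hI.add_mem hx (hI.neg_mem hy)

end Order

end Monoid

section CommMonoid

variable {R : Type*} [NonAssocRing R] {G : Type*} [CommMonoid G] (P : GDeriv R G)

theorem commute_of_commute_single_one {U : G →₀ R} (hUfix : ∀ c, U c ∈ P.fixed)
    (hcomm : ∀ s, P.mul (single 1 s) U = P.mul U (single 1 s)) (v : G →₀ R) :
    P.mul U v = P.mul v U := by
  induction v using Finsupp.induction_linear with
  | zero => rw [mul_zero', zero_mul']
  | add x y hx hy => rw [mul_add', add_mul', hx, hy]
  | single b s =>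
    rw [mul_single_eq_mapDomain, ← hcomm, single_one_mul, P.mul_single_eq_sum_of_fixed hUfix,
      mapDomain_sum]
    exact sum_congr fun a _ => by rw [mapDomain_single, mul_comm]

theorem mul_assoc_single_mid {U : G →₀ R} (hUfix : ∀ c, U c ∈ P.fixed)
    (hcomm : ∀ s, P.mul (single 1 s) U = P.mul U (single 1 s))
    (hassoc : ∀ s z : R, P.mul (P.mul (single 1 s) U) (single 1 z) =
      P.mul (single 1 s) (P.mul U (single 1 z)))
    (hD8 : ∀ (b : G) (t : R) (p : G),
      P.π b (t * U p) = mapRange (· * U p) (zero_mul _) (P.π b t))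
    (b : G) (s t : R) :
    P.mul (P.mul (single b s) U) (single 1 t) = P.mul (single b s) (P.mul U (single 1 t)) := by
  -- `hassoc` shifted by `x^q`, to be used with `z = π^b_q(t)` after expanding `π^{ab}` by (D4)
  have hassoc' : ∀ (q : G) (z : R), (U.sum fun a r => (P.π a z).sum fun p y =>
      single (p * q) ((s * r) * y)) = U.sum fun p r => single (p * q) (s * (z * r)) := by
    intro q z
    have := congrArg (mapDomain (· * q)) (hassoc s z)
    rw [← hcomm z, P.single_one_mul s U, P.single_one_mul z U, finsupp_sum_mul',
      mul_finsupp_sum'] at this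
    simpa only [mapDomain_sum, mul_single_single, P.d1, mapDomain_single, mul_one, one_mul,
      mul_zero, single_zero, sum_single_index] using this
  rw [P.mul_single_eq_sum_of_fixed hUfix, finsupp_sum_mul', ← hcomm, single_one_mul,
    mul_finsupp_sum']
  calc (U.sum fun a x => P.mul (single (b * a) (s * x)) (single 1 t))
      = (P.π b t).sum fun q z => U.sum fun p r => single (p * q) (s * (z * r)) := by
        simp only [mul_comm b, single_mul_mul_single_one]
        rw [Finsupp.sum_comm]
        exact sum_congr fun q _ => hassoc' q _
    _ = U.sum fun p r => P.mul (single b s) (single p (t * r)) := by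
        rw [Finsupp.sum_comm]
        refine sum_congr fun p _ => ?_
        rw [mul_single_single, hD8, sum_mapRange_index (by simp)]
        exact sum_congr fun q _ => by rw [mul_comm p q]

theorem mul_assoc_single_right {U : G →₀ R} (hUfix : ∀ c, U c ∈ P.fixed)
    (hcoeff : ∀ (s t : R) (g : G), (s * t) * U g = s * (t * U g))
    (hD8 : ∀ (b : G) (t : R) (p : G),
      P.π b (t * U p) = mapRange (· * U p) (zero_mul _) (P.π b t))
    (b g : G) (s t : R) :
    P.mul (P.mul (single b s) (single g t)) U = P.mul (single b s) (P.mul (single g t) U) := by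
  rw [mul_single_single, finsupp_sum_mul', P.mul_single_eq_sum_of_fixed hUfix,
    mul_finsupp_sum']
  simp only [P.mul_single_eq_sum_of_fixed hUfix]
  rw [Finsupp.sum_comm]
  refine sum_congr fun a _ => ?_
  rw [mul_single_single, hD8, sum_mapRange_index (by simp)]
  exact sum_congr fun d _ => by rw [mul_assoc, hcoeff]

theorem mem_Z_of_commute_single_one (h : P.RightLinear ∨ (P.LeftLinear ∧ P.Commutes))
    {U : G →₀ R} (hUfix : ∀ c, U c ∈ P.fixed)
    (hcomm : ∀ s, P.mul (single 1 s) U = P.mul U (single 1 s))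
    (hassoc : ∀ s z : R, P.mul (P.mul (single 1 s) U) (single 1 z) =
      P.mul (single 1 s) (P.mul U (single 1 z)))
    (hcoeff : ∀ (s t : R) (g : G), (s * t) * U g = s * (t * U g)) : U ∈ P.Z := by
  have hD8 := P.pi_mul_eq_mapRange h hUfix hcomm
  have hC := P.commute_of_commute_single_one hUfix hcomm
  have hNm : ∀ v w, P.mul (P.mul v U) w = P.mul v (P.mul U w) := by
    intro v w
    induction w using Finsupp.induction_linear with
    | zero => simp only [mul_zero']
    | add x y hx hy => rw [mul_add', mul_add', mul_add', hx, hy]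
    | single g t =>
      rw [mul_single_eq_mapDomain, P.mul_single_eq_mapDomain U, mul_mapDomain]
      congr 1
      induction v using Finsupp.induction_linear with
      | zero => simp only [zero_mul']
      | add x y hx hy => rw [add_mul', add_mul', add_mul', hx, hy]
      | single b s => exact P.mul_assoc_single_mid hUfix hcomm hassoc hD8 b s t
  have hNr : ∀ v w, P.mul (P.mul v w) U = P.mul v (P.mul w U) := by
    intro v w
    induction v using Finsupp.induction_linear with
    | zero => simp only [zero_mul']
    | add x y hx hy => rw [add_mul', add_mul', add_mul', hx, hy]
    | single b s =>
      induction w using Finsupp.induction_linear with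
      | zero => simp only [mul_zero', zero_mul']
      | add x y hx hy => rw [mul_add', add_mul', add_mul', mul_add', hx, hy]
      | single g t => exact P.mul_assoc_single_right hUfix hcoeff hD8 b g s t
  refine P.mem_Z_iff.mpr ⟨hC, fun v w => ?_, hNm, hNr⟩
  rw [hC v, hNm v w, hC w, ← hNr v w, hC (P.mul v w)]

section Order

variable [LinearOrder G]

theorem mem_ZG_of_apply_eq_one (hu : P.Unital) (hlt : P.IsLowerTriangular)
    (h : P.RightLinear ∨ (P.LeftLinear ∧ P.Commutes)) {I : Set (G →₀ R)}
    (hI : IsIdealWith P.mul I) (hInv : ∀ a b : G, ∀ u ∈ I, P.ext a b u ∈ I) {a₀ : G}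
    (hmin : ∀ v ∈ I, v.VanishesAbove a₀ → v a₀ = 0 → v = 0) {U : G →₀ R} (hUI : U ∈ I)
    (hUl : U.VanishesAbove a₀) (hU1 : U a₀ = 1) : U ∈ P.ZG := by
  have hfix : ∀ c, U c ∈ P.fixed := by
    refine P.mem_fixed_of_ext_eq_ite fun a b => ?_
    split_ifs with hab
    · subst hab
      exact P.eq_of_vanishesAbove_of_apply_eq hI hmin (hInv a a U hUI) hUI
        (P.ext_vanishesAbove hUl a a) hUl (by rw [ext_apply, hU1, P.d2, single_eq_same])
    · exact hmin _ (hInv a b U hUI) (P.ext_vanishesAbove hUl a b)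
        (by rw [ext_apply, hU1, P.d2, single_apply, if_neg hab])
  have hcomm : ∀ s, P.mul (single 1 s) U = P.mul U (single 1 s) := fun s =>
    P.eq_of_vanishesAbove_of_apply_eq hI hmin (hI.mul_mem_left _ hUI) (hI.mul_mem_right _ hUI)
      (P.single_one_mul_vanishesAbove hUl s) (P.mul_single_one_vanishesAbove hlt hUl s)
      (by rw [single_one_mul_apply, P.mul_single_one_apply_self hu hlt hUl, hU1, mul_one, one_mul])
  have hcoeff : ∀ (s t : R) (g : G), (s * t) * U g = s * (t * U g) := fun s t g => by
    have := P.eq_of_vanishesAbove_of_apply_eq hI hmin (hI.mul_mem_left (single 1 (s * t)) hUI)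
      (hI.mul_mem_left (single 1 s) (hI.mul_mem_left (single 1 t) hUI))
      (P.single_one_mul_vanishesAbove hUl _)
      (P.single_one_mul_vanishesAbove (P.single_one_mul_vanishesAbove hUl t) s)
      (by simp only [single_one_mul_apply, hU1, mul_one])
    simpa only [single_one_mul_apply] using congrArg (· g) this
  have hassoc : ∀ s z : R, P.mul (P.mul (single 1 s) U) (single 1 z) =
      P.mul (single 1 s) (P.mul U (single 1 z)) := fun s z =>
    P.eq_of_vanishesAbove_of_apply_eq hI hmin (hI.mul_mem_right _ (hI.mul_mem_left _ hUI))
      (hI.mul_mem_left _ (hI.mul_mem_right _ hUI))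
      (P.mul_single_one_vanishesAbove hlt (P.single_one_mul_vanishesAbove hUl s) z)
      (P.single_one_mul_vanishesAbove (P.mul_single_one_vanishesAbove hlt hUl z) s)
      (by rw [P.mul_single_one_apply_self hu hlt (P.single_one_mul_vanishesAbove hUl s),
        single_one_mul_apply, single_one_mul_apply, P.mul_single_one_apply_self hu hlt hUl, hU1,
        mul_one, one_mul])
  exact ⟨P.mem_Z_of_commute_single_one h hfix hcomm hassoc hcoeff,
    P.ext_eq_ite_of_forall_mem_fixed hfix⟩

theorem exists_minimal_exponent_apply_eq_one [WellFoundedLT G] (hu : P.Unital)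
    (hlt : P.IsLowerTriangular) (hR : P.RSimple) {I : Set (G →₀ R)}
    (hI : IsIdealWith P.mul I) (hInv : ∀ a b : G, ∀ u ∈ I, P.ext a b u ∈ I) {x : G →₀ R}
    (hx : x ∈ I) (hx0 : x ≠ 0) :
    ∃ a₀, (∀ v ∈ I, v.VanishesAbove a₀ → v a₀ = 0 → v = 0) ∧
      ∃ U ∈ I, U.VanishesAbove a₀ ∧ U a₀ = 1 := by
  obtain ⟨a₀, ⟨v, hv, hvl, hv0⟩, hmin⟩ := Finsupp.exists_minimal_top_exponent hx hx0
  refine ⟨a₀, hmin, ?_⟩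
  rcases hR (coeffsAt I a₀) (P.coeffsAt_isIdealWith hu hlt hI a₀)
    (fun a b r hr => P.pi_mem_coeffsAt hInv hr a b) with h0 | huniv
  · exact absurd (h0 ▸ ⟨v, hv, hvl, rfl⟩ : v a₀ ∈ ({0} : Set R)) hv0
  · exact (huniv ▸ Set.mem_univ (1 : R) : (1 : R) ∈ coeffsAt I a₀)

theorem ssimple_of_rsimple_of_lt [WellFoundedLT G] (hu : P.Unital) (hlt : P.IsLowerTriangular)
    (h : P.RightLinear ∨ (P.LeftLinear ∧ P.Commutes)) (hR : P.RSimple)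
    (hF : IsFieldWith P.mul P.one P.ZG) : P.SSimple := by
  intro I hI hInv
  by_cases hI0 : I = {0}
  · exact Or.inl hI0
  obtain ⟨x, hx, hx0⟩ : ∃ x ∈ I, x ≠ 0 := by
    by_contra! hall
    exact hI0 (Set.eq_singleton_iff_unique_mem.mpr ⟨hI.zero_mem, hall⟩)
  obtain ⟨a₀, hmin, U, hUI, hUl, hU1⟩ :=
    P.exists_minimal_exponent_apply_eq_one hu hlt hR hI hInv hx hx0
  have hU0 : U ≠ 0 := by
    rintro rfl
    exact hx0 (Finsupp.ext fun g => by rw [← mul_one (x g), ← hU1]; simp)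
  obtain ⟨w, -, hUw, -⟩ :=
    hF.2.2.2.2.2 U (P.mem_ZG_of_apply_eq_one hu hlt h hI hInv hmin hUI hUl hU1) hU0
  refine Or.inr (Set.eq_univ_of_forall fun v => ?_)
  rw [← P.mul_one' v, ← hUw]
  exact hI.mul_mem_left v (hI.mul_mem_right w hUI)

end Order

theorem ssimple_of_rsimple (hu : P.Unital) (hwo : P.WellOrdered)
    (h : P.RightLinear ∨ (P.LeftLinear ∧ P.Commutes)) (hR : P.RSimple)
    (hF : IsFieldWith P.mul P.one P.ZG) : P.SSimple := by
  obtain ⟨lt, hlt_wo, hlt⟩ := hwo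
  let := IsWellOrder.linearOrder lt
  have : WellFoundedLT G := ⟨hlt_wo.wf⟩
  exact P.ssimple_of_rsimple_of_lt hu hlt h hR hF

end CommMonoid

end GDeriv

theorem stmt12_general {R : Type*} [NonAssocRing R] {G : Type*} [CommMonoid G]
    (P : GDeriv R G) (hu : P.Unital) (hwo : P.WellOrdered)
    (h : P.RightLinear ∨ (P.LeftLinear ∧ P.Commutes)) :
    P.SSimple ↔ P.RSimple ∧ IsFieldWith P.mul P.one P.ZG :=
  ⟨fun hS => ⟨P.rsimple_of_ssimple hS, P.isFieldWith_ZG_of_ssimple h hS⟩,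
    fun ⟨hR, hF⟩ => P.ssimple_of_rsimple hu hwo h hR hF⟩

/-- **main theorem.** Let `G` be commutative and `π` a unital
`G`-derivation which is strong and well-ordered.  If (D8) holds, or (D7) holds and
`π` is commutative, then `S` is `G`-simple iff `R` is `G`-simple and `Z(S)^G` is a
field. -/
theorem stmt12 {R : Type*} [NonAssocRing R] {G : Type*} [CommMonoid G]
    (P : GDeriv R G) (hu : P.Unital) (hst : P.Strong) (hwo : P.WellOrdered)
    (h : P.RightLinear ∨ (P.LeftLinear ∧ P.Commutes)) :
    P.SSimple ↔ P.RSimple ∧ IsFieldWith P.mul P.one P.ZG :=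
  stmt12_general P hu hwo h
end

section
/- Let R be a unital non-associative ring, I a set well-ordered by ≪, and Δ = {δ_i}_{i∈I} a family of additive maps δ_i : R → R with δ_i(1) = 0, and let π^f_g (f,g ∈ ℕ^(I)) be defined by π^f_g(r) = C(f,g)·δ^{f−g}(r) if g ≤ f and π^f_g = 0 otherwise. Then the following are equivalent: (i) π satisfies (D4), i.e. π^{f+g}_h = Σ_{k,l ∈ ℕ^(I) with k+l = h} π^f_k ∘ π^g_l for all f,g,h ∈ ℕ^(I); (ii) π is commutative, i.e. π^f_g ∘ π^h_k = π^h_k ∘ π^f_g for all f,g,h,k ∈ ℕ^(I); (iii) Δ is commutative, i.e. δ_i ∘ δ_j = δ_j ∘ δ_i for all i,j ∈ I. -/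
open scoped Classical

/-- `A` is simple w.r.t. the multiplication `m`: `{0}` and `A` are its only
two-sided ideals. -/
def SimpleWith {A : Type*} [AddCommGroup A] (m : A → A → A) : Prop :=
  ∀ J : Set A, IsIdealWith m J → J = {0} ∨ J = Set.univ

/-- The center of `A` w.r.t. the multiplication `m`: elements commuting with all
elements whose associator with any two elements (in any position) vanishes. -/
def centerWith {A : Type*} [AddCommGroup A] (m : A → A → A) : Set A :=
  {u | (∀ v, m u v = m v u) ∧ (∀ v w, m (m u v) w = m u (m v w)) ∧
       (∀ v w, m (m v u) w = m v (m u w)) ∧ (∀ v w, m (m v w) u = m v (m w u))}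

variable {R : Type*} [NonAssocRing R] {I : Type*} [LinearOrder I]

/-- `δ^f = δ_{i₁}^{f(i₁)} ∘ ⋯ ∘ δ_{iₘ}^{f(iₘ)}` where `i₁ ≪ ⋯ ≪ iₘ` is the support
of `f` listed in increasing order. -/
def deltaPow (δ : I → R → R) (f : I →₀ ℕ) : R → R :=
  ((f.support.sort (· ≤ ·)).map fun i => (δ i)^[f i]).foldr (· ∘ ·) id

/-- `C(f,g) = ∏ᵢ binomial (f i) (g i)` (equal to `0` whenever `g ≰ f`). -/
def binomF (f g : I →₀ ℕ) : ℕ :=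
  ∏ i ∈ f.support ∪ g.support, Nat.choose (f i) (g i)

/-- `π^f_g(r) = C(f,g)·δ^{f-g}(r)` for `g ≤ f`, and `π^f_g = 0` otherwise. -/
noncomputable def piN (δ : I → R → R) (f g : I →₀ ℕ) (r : R) : R :=
  if g ≤ f then (binomF f g) • deltaPow δ (f - g) r else 0

/-- `R_Δ = ⋂ᵢ ker δᵢ`. -/
def RDelta (δ : I → R → R) : Set R := {r | ∀ i : I, δ i r = 0}

/-- `Δ` is a set of left kernel derivations: each `δᵢ` is left `R_Δ`-linear. -/
def LeftKernel (δ : I → R → R) : Prop :=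
  ∀ i : I, ∀ s ∈ RDelta δ, ∀ r : R, δ i (s * r) = s * δ i r

/-- `Δ` is a set of right kernel derivations: each `δᵢ` is right `R_Δ`-linear. -/
def RightKernel (δ : I → R → R) : Prop :=
  ∀ i : I, ∀ r : R, ∀ s ∈ RDelta δ, δ i (r * s) = δ i r * s

/-- `R` is `Δ`-simple: `{0}` and `R` are its only `Δ`-invariant ideals. -/
def DeltaSimple (δ : I → R → R) : Prop :=
  ∀ J : Set R, IsIdealWith (· * ·) J → (∀ i : I, ∀ r ∈ J, δ i r ∈ J) →
    J = {0} ∨ J = Set.univ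

/-- The multiplication of the differential monoid ring `S = R[ℕ^(I); π]` on
`(I →₀ ℕ) →₀ R`: the biadditive extension of
`(r x^f)(s x^g) = Σ_h r π^f_h(s) x^{h+g}`. -/
noncomputable def mulN (δ : I → R → R) (u v : (I →₀ ℕ) →₀ R) : (I →₀ ℕ) →₀ R :=
  u.sum fun f r => v.sum fun g s =>
    ∑ h ∈ Finset.Iic f, Finsupp.single (h + g) (r * piN δ f h s)

/-! If the `δᵢ` commute, `δ^f` is the product `∏ᵢ δᵢ^{f i}` computed in a commutative submonoid
of `Function.End R`, so `δ^{f+g} = δ^f ∘ δ^g`. Then `π^f_k ∘ π^g_l = C(f,k) C(g,l) δ^{(f-k)+(g-l)}`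
is symmetric in `(f,k)` and `(g,l)`, and (D4) reduces to the multivariate Vandermonde identity
`C(f+g,h) = Σ_{k+l=h} C(f,k) C(g,l)`, which is the coordinatewise one multiplied out.
Conversely, both (D4) for `f = eᵢ, g = eⱼ, h = 0` and the commutativity of `π^{eᵢ}_0`
with `π^{eⱼ}_0` say `δᵢ ∘ δⱼ = δⱼ ∘ δᵢ`. -/

open Finset.HasAntidiagonal

section OrderedPowProd

variable {M N : Type*} [Monoid M] [Monoid N]

def orderedPowProd (d : I → M) (f : I →₀ ℕ) : M :=
  ((f.support.sort (· ≤ ·)).map fun i => d i ^ f i).prod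

theorem map_orderedPowProd (φ : M →* N) (d : I → M) (f : I →₀ ℕ) :
    φ (orderedPowProd d f) = orderedPowProd (φ ∘ d) f := by
  simp [orderedPowProd, map_list_prod, Function.comp_def]

theorem orderedPowProd_eq_prod {M : Type*} [CommMonoid M] (d : I → M) (f : I →₀ ℕ) :
    orderedPowProd d f = f.prod fun i n => d i ^ n := by
  rw [orderedPowProd, Finsupp.prod, Finset.prod_eq_multiset_prod, ← Finset.sort_eq _ (· ≤ ·),
    Multiset.map_coe, Multiset.prod_coe]

open scoped IsMulCommutative in
theorem orderedPowProd_add {d : I → M} (hd : ∀ i j, Commute (d i) (d j)) (f g : I →₀ ℕ) :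
    orderedPowProd d (f + g) = orderedPowProd d f * orderedPowProd d g := by
  let S := Submonoid.closure (Set.range d)
  have : IsMulCommutative S := Submonoid.isMulCommutative_closure M <| by
    rintro _ ⟨i, rfl⟩ _ ⟨j, rfl⟩
    exact hd i j
  let e : I → S := fun i => ⟨d i, Submonoid.subset_closure ⟨i, rfl⟩⟩
  have h_subtype : ∀ f, orderedPowProd d f = S.subtype (orderedPowProd e f) :=
    fun f => (map_orderedPowProd S.subtype e f).symm
  rw [h_subtype, h_subtype, h_subtype, ← map_mul, orderedPowProd_eq_prod, orderedPowProd_eq_prod,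
    orderedPowProd_eq_prod, Finsupp.prod_add_index' (fun _ => pow_zero _) fun _ => pow_add _]

theorem orderedPowProd_single_one (d : I → M) (i : I) :
    orderedPowProd d (Finsupp.single i 1) = d i := by
  simp [orderedPowProd]

end OrderedPowProd

theorem Finsupp.prod_sum_antidiagonal {ι M : Type*} [DecidableEq ι] [CommSemiring M]
    (F : ι → ℕ → ℕ → M) {s : Finset ι} {h : ι →₀ ℕ} (hs : h.support ⊆ s) :
    ∏ i ∈ s, ∑ q ∈ antidiagonal (h i), F i q.1 q.2 =
      ∑ p ∈ antidiagonal h, ∏ i ∈ s, F i (p.1 i) (p.2 i) := by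
  have h_off : ∀ i ∉ s, h i = 0 := fun i hi => Finsupp.notMem_support_iff.mp (mt (@hs i) hi)
  rw [Finset.prod_sum]
  refine Finset.sum_nbij'
    (fun x => (Finsupp.indicator s fun i hi => (x i hi).1,
      Finsupp.indicator s fun i hi => (x i hi).2))
    (fun p i _ => (p.1 i, p.2 i)) ?_ ?_ ?_ ?_ ?_
  · intro x hx
    simp only [Finset.mem_pi, mem_antidiagonal] at hx ⊢
    ext i
    by_cases hi : i ∈ s
    · simp [Finsupp.indicator_of_mem hi, hx i hi]
    · simp [Finsupp.indicator_of_notMem hi, h_off i hi]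
  · intro p hp
    refine Finset.mem_pi.mpr fun i _ => ?_
    rw [mem_antidiagonal, ← mem_antidiagonal.mp hp]
    rfl
  · intro x _
    funext i hi
    simp [Finsupp.indicator_of_mem hi]
  · intro p hp
    have hp_off : ∀ i ∉ s, p.1 i = 0 ∧ p.2 i = 0 := fun i hi => by
      simpa [← mem_antidiagonal.mp hp] using h_off i hi
    refine Prod.ext ?_ ?_ <;> ext i <;> by_cases hi : i ∈ s <;>
      simp [Finsupp.indicator_apply, hi, hp_off]
  · intro x _
    rw [← Finset.prod_attach s]
    exact Finset.prod_congr rfl fun i _ => by simp [Finsupp.indicator_of_mem i.2]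

theorem binomF_eq_prod {f g : I →₀ ℕ} {s : Finset I} (hf : f.support ⊆ s) (hg : g.support ⊆ s) :
    binomF f g = ∏ i ∈ s, (f i).choose (g i) := by
  refine Finset.prod_subset (Finset.union_subset hf hg) fun i _ hi => ?_
  rw [Finsupp.notMem_support_iff.mp fun hgi => hi (Finset.mem_union_right _ hgi),
    Nat.choose_zero_right]

theorem binomF_eq_zero_of_not_le {f g : I →₀ ℕ} (h : ¬ g ≤ f) : binomF f g = 0 := by
  obtain ⟨i, hi⟩ : ∃ i, f i < g i := by simpa [Finsupp.le_def] using h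
  refine Finset.prod_eq_zero (Finset.mem_union_right _ ?_) (Nat.choose_eq_zero_of_lt hi)
  exact Finsupp.mem_support_iff.mpr (Nat.ne_zero_of_lt hi)

theorem binomF_zero_right (f : I →₀ ℕ) : binomF f 0 = 1 := by
  simp [binomF]

theorem binomF_add_eq_sum_antidiagonal (f g h : I →₀ ℕ) :
    binomF (f + g) h = ∑ p ∈ antidiagonal h, binomF f p.1 * binomF g p.2 := by
  set s := f.support ∪ g.support ∪ h.support
  have hf : f.support ⊆ s := Finset.subset_union_left.trans Finset.subset_union_left
  have hg : g.support ⊆ s := Finset.subset_union_right.trans Finset.subset_union_left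
  have hh : h.support ⊆ s := Finset.subset_union_right
  calc binomF (f + g) h
      = ∏ i ∈ s, ∑ q ∈ antidiagonal (h i), (f i).choose q.1 * (g i).choose q.2 := by
        rw [binomF_eq_prod (Finsupp.support_add.trans (Finset.union_subset hf hg)) hh]
        exact Finset.prod_congr rfl fun i _ => Nat.add_choose_eq _ _ _
    _ = ∑ p ∈ antidiagonal h, ∏ i ∈ s, (f i).choose (p.1 i) * (g i).choose (p.2 i) :=
        Finsupp.prod_sum_antidiagonal (fun i a b => (f i).choose a * (g i).choose b) hh
    _ = ∑ p ∈ antidiagonal h, binomF f p.1 * binomF g p.2 := by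
        refine Finset.sum_congr rfl fun p hp => ?_
        rw [mem_antidiagonal] at hp
        have hp₁ : p.1.support ⊆ s := (Finsupp.support_mono (hp ▸ le_self_add : p.1 ≤ h)).trans hh
        have hp₂ : p.2.support ⊆ s := (Finsupp.support_mono (hp ▸ le_add_self : p.2 ≤ h)).trans hh
        rw [binomF_eq_prod hf hp₁, binomF_eq_prod hg hp₂, Finset.prod_mul_distrib]

section DeltaPow

variable {A : Type*}

/- `deltaPow δ f` unfolds to `orderedPowProd δ f` computed in the monoid `Function.End A`,
whose multiplication is composition and whose powers are iterates. -/

theorem deltaPow_single_one (δ : I → A → A) (i : I) : deltaPow δ (Finsupp.single i 1) = δ i :=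
  orderedPowProd_single_one (M := Function.End A) δ i

theorem deltaPow_add {δ : I → A → A} (hδ : ∀ i j, δ i ∘ δ j = δ j ∘ δ i) (f g : I →₀ ℕ) :
    deltaPow δ (f + g) = deltaPow δ f ∘ deltaPow δ g :=
  orderedPowProd_add (M := Function.End A) hδ f g

theorem deltaPow_nsmul [AddGroup A] {δ : I → A → A} (hδ : ∀ i a b, δ i (a + b) = δ i a + δ i b)
    (f : I →₀ ℕ) (n : ℕ) (a : A) : deltaPow δ f (n • a) = n • deltaPow δ f a := by
  let d : I → AddMonoid.End A := fun i => AddMonoidHom.mk' (δ i) (hδ i)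
  have h_coe : deltaPow δ f = ⇑(orderedPowProd d f) :=
    (map_orderedPowProd MulAction.toEndHom d f).symm
  rw [h_coe, map_nsmul]

end DeltaPow

section PiN

variable {δ : I → R → R}

variable (δ) in
theorem piN_eq_nsmul (f g : I →₀ ℕ) (r : R) :
    piN δ f g r = binomF f g • deltaPow δ (f - g) r := by
  unfold piN
  split_ifs with h
  · rfl
  · rw [binomF_eq_zero_of_not_le h, zero_smul]

variable (δ) in
theorem piN_zero_right (f : I →₀ ℕ) (r : R) : piN δ f 0 r = deltaPow δ f r := by
  rw [piN_eq_nsmul, binomF_zero_right, tsub_zero, one_smul]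

variable (hadd : ∀ i r s, δ i (r + s) = δ i r + δ i s) (hδ : ∀ i j, δ i ∘ δ j = δ j ∘ δ i)
include hadd hδ

theorem piN_piN (f k g l : I →₀ ℕ) (r : R) :
    piN δ f k (piN δ g l r) = (binomF f k * binomF g l) • deltaPow δ (f - k + (g - l)) r := by
  rw [piN_eq_nsmul, piN_eq_nsmul, deltaPow_nsmul hadd, smul_smul, deltaPow_add hδ,
    Function.comp_apply]

theorem piN_piN_of_mem_antidiagonal (f g : I →₀ ℕ) {h : I →₀ ℕ} {p : (I →₀ ℕ) × (I →₀ ℕ)}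
    (hp : p ∈ antidiagonal h) (r : R) :
    piN δ f p.1 (piN δ g p.2 r) = (binomF f p.1 * binomF g p.2) • deltaPow δ (f + g - h) r := by
  rw [piN_piN hadd hδ, ← mem_antidiagonal.mp hp]
  by_cases hle : p.1 ≤ f ∧ p.2 ≤ g
  · rw [tsub_add_tsub_comm hle.1 hle.2]
  · rcases not_and_or.mp hle with hle | hle <;> simp [binomF_eq_zero_of_not_le hle]

end PiN

theorem stmt13_general {R : Type*} [NonAssocRing R] {I : Type*} [LinearOrder I]
    (δ : I → R → R)
    (hadd : ∀ (i : I) (r s : R), δ i (r + s) = δ i r + δ i s) :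
    ((∀ (f g h : I →₀ ℕ) (r : R),
        piN δ (f + g) h r =
          ∑ p ∈ Finset.HasAntidiagonal.antidiagonal h, piN δ f p.1 (piN δ g p.2 r)) ↔
      (∀ i j : I, δ i ∘ δ j = δ j ∘ δ i)) ∧
    ((∀ (f g h k : I →₀ ℕ) (r : R),
        piN δ f g (piN δ h k r) = piN δ h k (piN δ f g r)) ↔
      (∀ i j : I, δ i ∘ δ j = δ j ∘ δ i)) := by
  refine ⟨⟨fun hD4 i j => funext fun r => ?_, fun hδ f g h r => ?_⟩,
    ⟨fun hcomm i j => funext fun r => ?_, fun hδ f k g l r => ?_⟩⟩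
  · have hij := hD4 (Finsupp.single i 1) (Finsupp.single j 1) 0 r
    have hji := hD4 (Finsupp.single j 1) (Finsupp.single i 1) 0 r
    rw [add_comm] at hji
    simp only [Finsupp.antidiagonal_zero, Finset.sum_singleton, piN_zero_right,
      deltaPow_single_one] at hij hji
    exact hij.symm.trans hji
  · rw [piN_eq_nsmul, binomF_add_eq_sum_antidiagonal, Finset.sum_smul]
    exact Finset.sum_congr rfl fun p hp => (piN_piN_of_mem_antidiagonal hadd hδ f g hp r).symm
  · simpa only [piN_zero_right, deltaPow_single_one, Function.comp_apply] using
      hcomm (Finsupp.single i 1) 0 (Finsupp.single j 1) 0 r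
  · rw [piN_piN hadd hδ, piN_piN hadd hδ, mul_comm, add_comm]

/-- For additive maps `δᵢ` with `δᵢ(1) = 0` and
`π^f_g = C(f,g)·δ^{f-g}` (for `g ≤ f`, else `0`), the following are equivalent:
(i) `π` satisfies (D4); (ii) `π` is commutative; (iii) `Δ` is commutative. -/
theorem stmt13 {R : Type*} [NonAssocRing R] {I : Type*} [LinearOrder I]
    [WellFoundedLT I] (δ : I → R → R)
    (hadd : ∀ (i : I) (r s : R), δ i (r + s) = δ i r + δ i s)
    (h1 : ∀ i : I, δ i 1 = 0) :
    ((∀ (f g h : I →₀ ℕ) (r : R),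
        piN δ (f + g) h r =
          ∑ p ∈ Finset.HasAntidiagonal.antidiagonal h, piN δ f p.1 (piN δ g p.2 r)) ↔
      (∀ i j : I, δ i ∘ δ j = δ j ∘ δ i)) ∧
    ((∀ (f g h k : I →₀ ℕ) (r : R),
        piN δ f g (piN δ h k r) = piN δ h k (piN δ f g r)) ↔
      (∀ i j : I, δ i ∘ δ j = δ j ∘ δ i)) :=
  stmt13_general δ hadd
end
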